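/- Let m ≥ 1, let O = {l ∈ ℝᵐ : lᵢ > 0 for all i} be the open positive orthant, and let f : O → ℝᵐ be locally Lipschitz with |fᵢ(l)| ≤ C for all l ∈ O, all i, and some constant C ≥ 0. Then for every l₀ ∈ O there exists a unique differentiable curve l : [0,∞) → O with l(0) = l₀ satisfying lᵢ'(t) = fᵢ(l(t))·lᵢ(t) for all i and all t ≥ 0; moreover every such solution satisfies l₀ᵢ·e^{−Ct} ≤ lᵢ(t) ≤ l₀ᵢ·e^{Ct} for all i and t ≥ 0. -/

import Mathlib

/-!
In logarithmic coordinates `u = log l` the flow becomes the autonomous equation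
`u' = f (exp u)`, whose vector field is locally Lipschitz on all of `ℝᵐ` and bounded by `C`.
Boundedness keeps a solution within distance `C t` of `log l₀`, so Picard–Lindelöf applies on
every `[0, n]`; solutions on these intervals agree, since the field is Lipschitz on the compact
image of any two of them, and glue to a solution on `[0, ∞)`. The estimate
`|log lᵢ(t) - log l₀ᵢ| ≤ C t` is the stated two-sided bound.
-/

open Real Set

/-- `l : ℝ → (Fin m → ℝ)` is a solution on `[0,∞)` of the flow `lᵢ' = fᵢ(l)·lᵢ` with
initial value `l₀`, staying in the open positive orthant. -/
def IsFlowSolution (m : ℕ) (f : (Fin m → ℝ) → Fin m → ℝ) (l₀ : Fin m → ℝ)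
    (l : ℝ → Fin m → ℝ) : Prop :=
  (∀ t, 0 ≤ t → ∀ i, 0 < l t i) ∧ l 0 = l₀ ∧
    ∀ t, 0 ≤ t → ∀ i,
      HasDerivWithinAt (fun s => l s i) (f (l t) i * l t i) (Set.Ici (0 : ℝ)) t

lemma LocallyLipschitzOn.comp_locallyLipschitz {α β γ : Type*} [PseudoEMetricSpace α]
    [PseudoEMetricSpace β] [PseudoEMetricSpace γ] {f : β → γ} {g : α → β} {s : Set β}
    (hf : LocallyLipschitzOn s f) (hg : LocallyLipschitz g) (hgs : ∀ x, g x ∈ s) :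
    LocallyLipschitz (f ∘ g) := by
  intro x
  obtain ⟨Kg, t, ht, hgt⟩ := hg x
  obtain ⟨Kf, u, hu, hfu⟩ := hf (hgs x)
  obtain ⟨v, hv, hxv, hvu⟩ := mem_nhdsWithin.1 hu
  refine ⟨Kf * Kg, t ∩ g ⁻¹' v, Filter.inter_mem ht (hg.continuous.continuousAt.preimage_mem_nhds
    (hv.mem_nhds hxv)), ?_⟩
  exact hfu.comp (hgt.mono inter_subset_left) fun y hy => hvu ⟨hy.2, hgs y⟩

lemma Real.mul_exp_neg_le_and_le_mul_exp_of_abs_log_sub_le {x y c : ℝ} (hx : 0 < x) (hy : 0 < y)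
    (h : |log y - log x| ≤ c) : x * exp (-c) ≤ y ∧ y ≤ x * exp c := by
  rw [abs_le] at h
  constructor
  · calc x * exp (-c) = exp (log x + -c) := by rw [exp_add, exp_log hx]
      _ ≤ exp (log y) := exp_le_exp.2 (by linarith)
      _ = y := exp_log hy
  · calc y = exp (log y) := (exp_log hy).symm
      _ ≤ exp (log x + c) := exp_le_exp.2 (by linarith)
      _ = x * exp c := by rw [exp_add, exp_log hx]

section AutonomousODE

variable {E : Type*} [NormedAddCommGroup E] [NormedSpace ℝ E] {g : E → E}

theorem eqOn_Icc_of_hasDerivWithinAt_of_locallyLipschitz (hg : LocallyLipschitz g)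
    {u v : ℝ → E} {a b : ℝ}
    (hu : ∀ t ∈ Icc a b, HasDerivWithinAt u (g (u t)) (Icc a b) t)
    (hv : ∀ t ∈ Icc a b, HasDerivWithinAt v (g (v t)) (Icc a b) t) (ha : u a = v a) :
    EqOn u v (Icc a b) := by
  have hu_cont : ContinuousOn u (Icc a b) := fun t ht => (hu t ht).continuousWithinAt
  have hv_cont : ContinuousOn v (Icc a b) := fun t ht => (hv t ht).continuousWithinAt
  have hK : IsCompact (u '' Icc a b ∪ v '' Icc a b) :=
    (isCompact_Icc.image_of_continuousOn hu_cont).union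
      (isCompact_Icc.image_of_continuousOn hv_cont)
  obtain ⟨L, hL⟩ := hg.locallyLipschitzOn.exists_lipschitzOnWith_of_compact hK
  have right_deriv {w : ℝ → E} (hw : ∀ t ∈ Icc a b, HasDerivWithinAt w (g (w t)) (Icc a b) t) :
      ∀ t ∈ Ico a b, HasDerivWithinAt w (g (w t)) (Ici t) t := fun t ht =>
    (hw t (Ico_subset_Icc_self ht)).mono_of_mem_nhdsWithin
      (Filter.mem_of_superset (Icc_mem_nhdsGE ht.2) (Icc_subset_Icc_left ht.1))
  exact ODE_solution_unique_of_mem_Icc_right (v := fun _ => g) (s := fun _ => _)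
    (fun _ _ => hL) hu_cont (right_deriv hu)
    (fun t ht => Or.inl (mem_image_of_mem u (Ico_subset_Icc_self ht))) hv_cont (right_deriv hv)
    (fun t ht => Or.inr (mem_image_of_mem v (Ico_subset_Icc_self ht))) ha

variable [CompleteSpace E] [ProperSpace E] {C : ℝ}

theorem exists_hasDerivWithinAt_Icc_of_locallyLipschitz (hg : LocallyLipschitz g)
    (hgC : ∀ x, ‖g x‖ ≤ C) (x₀ : E) {b : ℝ} (hb : 0 ≤ b) :
    ∃ u : ℝ → E, u 0 = x₀ ∧ ∀ t ∈ Icc 0 b, HasDerivWithinAt u (g (u t)) (Icc 0 b) t := by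
  have hC : 0 ≤ C := (norm_nonneg _).trans (hgC 0)
  obtain ⟨K, hK⟩ := hg.locallyLipschitzOn.exists_lipschitzOnWith_of_compact
    (isCompact_closedBall x₀ (C * b))
  have hPL : IsPicardLindelof (fun _ => g) (tmin := 0) (tmax := b) ⟨0, le_rfl, hb⟩ x₀
      ⟨C * b, mul_nonneg hC hb⟩ 0 ⟨C, hC⟩ K :=
    .of_time_independent (fun x _ => hgC x) hK (by simp [hb]; exact le_rfl)
  exact hPL.exists_eq_forall_mem_Icc_hasDerivWithinAt₀

theorem exists_hasDerivWithinAt_Ici_of_locallyLipschitz (hg : LocallyLipschitz g)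
    (hgC : ∀ x, ‖g x‖ ≤ C) (x₀ : E) :
    ∃ u : ℝ → E, u 0 = x₀ ∧ ∀ t, 0 ≤ t → HasDerivWithinAt u (g (u t)) (Ici 0) t := by
  choose U hU0 hU using fun n : ℕ =>
    exists_hasDerivWithinAt_Icc_of_locallyLipschitz hg hgC x₀ n.cast_nonneg
  have hUU {n N : ℕ} (hnN : n ≤ N) : EqOn (U n) (U N) (Icc 0 n) := by
    have hIcc : Icc (0 : ℝ) n ⊆ Icc 0 N := Icc_subset_Icc_right (by exact_mod_cast hnN)
    exact eqOn_Icc_of_hasDerivWithinAt_of_locallyLipschitz hg (hU n)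
      (fun t ht => (hU N t (hIcc ht)).mono hIcc) (by rw [hU0, hU0])
  have lt_floor_succ (t : ℝ) : t < (⌊t⌋₊ + 1 : ℕ) := by
    push_cast; exact Nat.lt_floor_add_one t
  set u : ℝ → E := fun t => U (⌊t⌋₊ + 1) t
  have hu_eq (n : ℕ) : EqOn u (U n) (Icc 0 n) := fun s hs => by
    have hs' : s ∈ Icc (0 : ℝ) (⌊s⌋₊ + 1 : ℕ) := ⟨hs.1, (lt_floor_succ s).le⟩
    rcases le_total (⌊s⌋₊ + 1) n with h | h
    · exact hUU h hs'
    · exact (hUU h hs).symm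
  refine ⟨u, by simpa [u] using hU0 1, fun t ht => ?_⟩
  set n := ⌊t⌋₊ + 1
  have htn : t ∈ Icc (0 : ℝ) n := ⟨ht, (lt_floor_succ t).le⟩
  have hIcc_mem : Icc (0 : ℝ) n ∈ nhdsWithin t (Ici 0) :=
    Filter.mem_of_superset (inter_mem_nhdsWithin _ (Iio_mem_nhds (lt_floor_succ t)))
      fun s hs => ⟨hs.1, le_of_lt hs.2⟩
  rw [hu_eq n htn]
  exact ((hU n t htn).congr_of_mem (hu_eq n) htn).mono_of_mem_nhdsWithin hIcc_mem

end AutonomousODE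

/-- The vector field of the flow `lᵢ' = fᵢ(l)·lᵢ` in the coordinates `u = log l`. -/
noncomputable def logField {ι : Type*} (f : (ι → ℝ) → ι → ℝ) (u : ι → ℝ) : ι → ℝ :=
  f fun i => exp (u i)

lemma locallyLipschitz_logField {ι : Type*} [Fintype ι] {f : (ι → ℝ) → ι → ℝ}
    (hf : LocallyLipschitzOn {l | ∀ i, 0 < l i} f) : LocallyLipschitz (logField f) :=
  have hexp : ContDiff ℝ 1 fun u : ι → ℝ => fun i => exp (u i) :=
    contDiff_pi.2 fun i => contDiff_exp.comp (contDiff_apply ℝ ℝ i)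
  hf.comp_locallyLipschitz hexp.locallyLipschitz fun u i => exp_pos (u i)

lemma norm_logField_le {ι : Type*} [Fintype ι] {f : (ι → ℝ) → ι → ℝ} {C : ℝ} (hC : 0 ≤ C)
    (hbd : ∀ l : ι → ℝ, (∀ i, 0 < l i) → ∀ i, |f l i| ≤ C) (u : ι → ℝ) :
    ‖logField f u‖ ≤ C :=
  (pi_norm_le_iff_of_nonneg hC).2 fun i => hbd _ (fun i => exp_pos (u i)) i

namespace IsFlowSolution

variable {m : ℕ} {f : (Fin m → ℝ) → Fin m → ℝ} {l₀ : Fin m → ℝ} {l : ℝ → Fin m → ℝ}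

lemma hasDerivWithinAt_log (hl : IsFlowSolution m f l₀ l) {t : ℝ} (ht : 0 ≤ t) :
    HasDerivWithinAt (fun s i => log (l s i)) (logField f fun i => log (l t i)) (Ici 0) t := by
  have hexp_log : (fun i => exp (log (l t i))) = l t := funext fun i => exp_log (hl.1 t ht i)
  refine hasDerivWithinAt_pi.2 fun i => ?_
  have h := (hl.2.2 t ht i).log (hl.1 t ht i).ne'
  rw [mul_div_cancel_right₀ _ (hl.1 t ht i).ne'] at h
  rwa [logField, hexp_log]

lemma norm_log_sub_log_le (hl : IsFlowSolution m f l₀ l) {C : ℝ}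
    (hC : ∀ u, ‖logField f u‖ ≤ C) {t : ℝ} (ht : 0 ≤ t) :
    ‖(fun i => log (l t i)) - fun i => log (l₀ i)‖ ≤ C * t := by
  have := Convex.norm_image_sub_le_of_norm_hasDerivWithin_le
    (fun s hs => hl.hasDerivWithinAt_log hs) (fun s _ => hC _) (convex_Ici 0) self_mem_Ici ht
  simpa only [hl.2.1, sub_zero, Real.norm_eq_abs, abs_of_nonneg ht] using this

end IsFlowSolution

lemma isFlowSolution_exp {m : ℕ} {f : (Fin m → ℝ) → Fin m → ℝ} {u : ℝ → Fin m → ℝ}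
    (hu : ∀ t, 0 ≤ t → HasDerivWithinAt u (logField f (u t)) (Ici 0) t) :
    IsFlowSolution m f (fun i => exp (u 0 i)) fun t i => exp (u t i) := by
  refine ⟨fun t _ i => exp_pos _, rfl, fun t ht i => ?_⟩
  rw [mul_comm]
  exact (hasDerivWithinAt_pi.1 (hu t ht) i).exp

theorem flow_longtime_existence_uniqueness (m : ℕ)
    (f : (Fin m → ℝ) → Fin m → ℝ) (C : ℝ) (hC : 0 ≤ C)
    (hf : LocallyLipschitzOn {l : Fin m → ℝ | ∀ i, 0 < l i} f)
    (hbd : ∀ l : Fin m → ℝ, (∀ i, 0 < l i) → ∀ i, |f l i| ≤ C)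
    (l₀ : Fin m → ℝ) (hl₀ : ∀ i, 0 < l₀ i) :
    (∃ l : ℝ → Fin m → ℝ, IsFlowSolution m f l₀ l) ∧
      (∀ l l' : ℝ → Fin m → ℝ, IsFlowSolution m f l₀ l → IsFlowSolution m f l₀ l' →
        ∀ t, 0 ≤ t → l t = l' t) ∧
      (∀ l : ℝ → Fin m → ℝ, IsFlowSolution m f l₀ l → ∀ t, 0 ≤ t → ∀ i,
        l₀ i * Real.exp (-(C * t)) ≤ l t i ∧ l t i ≤ l₀ i * Real.exp (C * t)) := by
  have hg := locallyLipschitz_logField hf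
  have hgC := norm_logField_le hC hbd
  refine ⟨?existence, ?uniqueness, ?bounds⟩
  case existence =>
    obtain ⟨u, hu0, hu⟩ :=
      exists_hasDerivWithinAt_Ici_of_locallyLipschitz hg hgC fun i => log (l₀ i)
    have hexp_u0 : (fun i => exp (u 0 i)) = l₀ := funext fun i => by rw [hu0, exp_log (hl₀ i)]
    exact ⟨_, hexp_u0 ▸ isFlowSolution_exp hu⟩
  case uniqueness =>
    intro l l' hl hl' t ht
    have hlog := eqOn_Icc_of_hasDerivWithinAt_of_locallyLipschitz hg
      (fun s hs => (hl.hasDerivWithinAt_log hs.1).mono Icc_subset_Ici_self)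
      (fun s hs => (hl'.hasDerivWithinAt_log hs.1).mono Icc_subset_Ici_self)
      (by simp [hl.2.1, hl'.2.1]) (right_mem_Icc.2 ht)
    exact funext fun i => log_injOn_pos (hl.1 t ht i) (hl'.1 t ht i) (congrFun hlog i)
  case bounds =>
    intro l hl t ht i
    refine mul_exp_neg_le_and_le_mul_exp_of_abs_log_sub_le (hl₀ i) (hl.1 t ht i) ?_
    simpa using (norm_le_pi_norm _ i).trans (hl.norm_log_sub_log_le hgC ht)
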